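/- arXiv:2009.03552 — 2 statements merged into one kernel-verified Lean document; each statement's English description precedes it below -/
import Mathlib

section
/- Let (L₁,≤₁) and (L₂,≤₂) be linear orders, let R = L₁ ∩ L₂, and suppose ≤₁ and ≤₂ agree on R. Then the relation ≤ on L₁ ∪ L₂ defined by: x ≤ y iff (x,y ∈ L₁ and x ≤₁ y), or (x,y ∈ L₂ and x ≤₂ y), or (x ∈ L₁ \ R, y ∈ L₂ \ R, and there exists r ∈ R with x ≤₁ r and r ≤₂ y), or (x ∈ L₂ \ R, y ∈ L₁ \ R, and there is no r ∈ R with y ≤₁ r and r ≤₂ x), is a linear order on L₁ ∪ L₂ extending both ≤₁ and ≤₂, and it satisfies: for all l₁ ∈ L₁ \ R and l₂ ∈ L₂ \ R, l₁ < l₂ iff there exists r ∈ R with l₁ <₁ r and r <₂ l₂. -/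
/-!
On `L₁` and on `L₂` the relation is `≤₁`, resp. `≤₂` (on `R` these agree). For `x ∈ L₁` and
`y ∈ L₂` one has `x ≤ y` iff `x ≤₁ r ≤₂ y` for some `r ∈ R`: when `x` or `y` lies in `R` this is
transitivity through `r`. For `x ∈ L₁ \ L₂` and `y ∈ L₂ \ L₁` the clauses defining `x ≤ y` and
`y ≤ x` are complementary, which gives antisymmetry and totality. By totality, transitivity
reduces to showing that a cycle `x ≤ y ≤ z ≤ x` collapses. A cycle that does not stay inside one
`Lᵢ` has a step `x ≤ y` with `x ∈ L₁`, `y ∈ L₂`; interpolating its witness `r ∈ R` into the rest of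
the cycle yields an inequality opposite to one of the cycle's steps.
-/

/-- `r` is a linear order on the set `S`. -/
def IsLinearOrderOn {α : Type*} (S : Set α) (r : α → α → Prop) : Prop :=
  (∀ x ∈ S, r x x) ∧
  (∀ x ∈ S, ∀ y ∈ S, r x y → r y x → x = y) ∧
  (∀ x ∈ S, ∀ y ∈ S, ∀ z ∈ S, r x y → r y z → r x z) ∧
  (∀ x ∈ S, ∀ y ∈ S, r x y ∨ r y x)

section

variable {α : Type*}

theorem Set.mem_union_cases {s t : Set α} {x y : α} (hx : x ∈ s ∪ t) (hy : y ∈ s ∪ t) :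
    (x ∈ s ∧ y ∈ s) ∨ (x ∈ t ∧ y ∈ t) ∨ (x ∈ s \ t ∧ y ∈ t \ s) ∨ (x ∈ t \ s ∧ y ∈ s \ t) := by
  simp only [Set.mem_union, Set.mem_sdiff] at *
  tauto

namespace IsLinearOrderOn

variable {S : Set α} {r r' : α → α → Prop} {x y z : α}

theorem refl (h : IsLinearOrderOn S r) (hx : x ∈ S) : r x x := h.1 x hx

theorem antisymm (h : IsLinearOrderOn S r) (hx : x ∈ S) (hy : y ∈ S) (hxy : r x y)
    (hyx : r y x) : x = y :=
  h.2.1 x hx y hy hxy hyx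

theorem trans (h : IsLinearOrderOn S r) (hx : x ∈ S) (hy : y ∈ S) (hz : z ∈ S) (hxy : r x y)
    (hyz : r y z) : r x z :=
  h.2.2.1 x hx y hy z hz hxy hyz

theorem total (h : IsLinearOrderOn S r) (hx : x ∈ S) (hy : y ∈ S) : r x y ∨ r y x :=
  h.2.2.2 x hx y hy

theorem eq_of_cycle (h : IsLinearOrderOn S r) (hx : x ∈ S) (hy : y ∈ S) (hz : z ∈ S)
    (hxy : r x y) (hyz : r y z) (hzx : r z x) : x = y :=
  h.antisymm hx hy hxy (h.trans hy hz hx hyz hzx)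

theorem rel_and_not_rel_iff (h : IsLinearOrderOn S r) (hx : x ∈ S) (hy : y ∈ S) (hne : x ≠ y) :
    (r x y ∧ ¬ r y x) ↔ r x y :=
  ⟨And.left, fun hxy => ⟨hxy, fun hyx => hne (h.antisymm hx hy hxy hyx)⟩⟩

theorem congr (h : IsLinearOrderOn S r) (hr : ∀ x ∈ S, ∀ y ∈ S, r' x y ↔ r x y) :
    IsLinearOrderOn S r' := by
  simp +contextual only [IsLinearOrderOn, hr] at h ⊢
  exact h

end IsLinearOrderOn

def amalgam (L₁ L₂ : Set α) (r₁ r₂ : α → α → Prop) (x y : α) : Prop :=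
  (x ∈ L₁ ∧ y ∈ L₁ ∧ r₁ x y) ∨
  (x ∈ L₂ ∧ y ∈ L₂ ∧ r₂ x y) ∨
  (x ∈ L₁ \ L₂ ∧ y ∈ L₂ \ L₁ ∧ ∃ r ∈ L₁ ∩ L₂, r₁ x r ∧ r₂ r y) ∨
  (x ∈ L₂ \ L₁ ∧ y ∈ L₁ \ L₂ ∧ ¬ ∃ r ∈ L₁ ∩ L₂, r₁ y r ∧ r₂ r x)

variable {L₁ L₂ : Set α} {r₁ r₂ : α → α → Prop} {x y z : α}

theorem amalgam_iff_left (hagree : ∀ x ∈ L₁ ∩ L₂, ∀ y ∈ L₁ ∩ L₂, r₁ x y ↔ r₂ x y)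
    (hx : x ∈ L₁) (hy : y ∈ L₁) : amalgam L₁ L₂ r₁ r₂ x y ↔ r₁ x y := by
  refine ⟨?_, fun hxy => Or.inl ⟨hx, hy, hxy⟩⟩
  rintro (⟨-, -, hxy⟩ | ⟨hx₂, hy₂, hxy⟩ | ⟨-, ⟨-, hy₁⟩, -⟩ | ⟨⟨-, hx₁⟩, -⟩)
  · exact hxy
  · exact (hagree x ⟨hx, hx₂⟩ y ⟨hy, hy₂⟩).2 hxy
  · exact absurd hy hy₁
  · exact absurd hx hx₁

theorem amalgam_iff_right (hagree : ∀ x ∈ L₁ ∩ L₂, ∀ y ∈ L₁ ∩ L₂, r₁ x y ↔ r₂ x y)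
    (hx : x ∈ L₂) (hy : y ∈ L₂) : amalgam L₁ L₂ r₁ r₂ x y ↔ r₂ x y := by
  refine ⟨?_, fun hxy => Or.inr (Or.inl ⟨hx, hy, hxy⟩)⟩
  rintro (⟨hx₁, hy₁, hxy⟩ | ⟨-, -, hxy⟩ | ⟨⟨-, hx₂⟩, -⟩ | ⟨-, ⟨-, hy₂⟩, -⟩)
  · exact (hagree x ⟨hx₁, hx⟩ y ⟨hy₁, hy⟩).1 hxy
  · exact hxy
  · exact absurd hx hx₂
  · exact absurd hy hy₂

theorem isLinearOrderOn_left_amalgam (h₁ : IsLinearOrderOn L₁ r₁)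
    (hagree : ∀ x ∈ L₁ ∩ L₂, ∀ y ∈ L₁ ∩ L₂, r₁ x y ↔ r₂ x y) :
    IsLinearOrderOn L₁ (amalgam L₁ L₂ r₁ r₂) :=
  h₁.congr fun _ hx _ hy => amalgam_iff_left hagree hx hy

theorem isLinearOrderOn_right_amalgam (h₂ : IsLinearOrderOn L₂ r₂)
    (hagree : ∀ x ∈ L₁ ∩ L₂, ∀ y ∈ L₁ ∩ L₂, r₁ x y ↔ r₂ x y) :
    IsLinearOrderOn L₂ (amalgam L₁ L₂ r₁ r₂) :=
  h₂.congr fun _ hx _ hy => amalgam_iff_right hagree hx hy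

theorem amalgam_iff_exists_between (h₁ : IsLinearOrderOn L₁ r₁) (h₂ : IsLinearOrderOn L₂ r₂)
    (hagree : ∀ x ∈ L₁ ∩ L₂, ∀ y ∈ L₁ ∩ L₂, r₁ x y ↔ r₂ x y) (hx : x ∈ L₁) (hy : y ∈ L₂) :
    amalgam L₁ L₂ r₁ r₂ x y ↔ ∃ r ∈ L₁ ∩ L₂, r₁ x r ∧ r₂ r y := by
  by_cases hx₂ : x ∈ L₂
  · rw [amalgam_iff_right hagree hx₂ hy]
    refine ⟨fun hxy => ⟨x, ⟨hx, hx₂⟩, h₁.refl hx, hxy⟩, ?_⟩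
    rintro ⟨r, hr, hxr, hry⟩
    exact h₂.trans hx₂ hr.2 hy ((hagree x ⟨hx, hx₂⟩ r hr).1 hxr) hry
  by_cases hy₁ : y ∈ L₁
  · rw [amalgam_iff_left hagree hx hy₁]
    refine ⟨fun hxy => ⟨y, ⟨hy₁, hy⟩, hxy, h₂.refl hy⟩, ?_⟩
    rintro ⟨r, hr, hxr, hry⟩
    exact h₁.trans hx hr.1 hy₁ hxr ((hagree r hr y ⟨hy₁, hy⟩).2 hry)
  simp [amalgam, hx, hx₂, hy, hy₁]

theorem amalgam_iff_not_amalgam_swap (h₁ : IsLinearOrderOn L₁ r₁) (h₂ : IsLinearOrderOn L₂ r₂)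
    (hagree : ∀ x ∈ L₁ ∩ L₂, ∀ y ∈ L₁ ∩ L₂, r₁ x y ↔ r₂ x y) (hx : x ∈ L₂ \ L₁)
    (hy : y ∈ L₁ \ L₂) : amalgam L₁ L₂ r₁ r₂ x y ↔ ¬ amalgam L₁ L₂ r₁ r₂ y x := by
  rw [amalgam_iff_exists_between h₁ h₂ hagree hy.1 hx.1]
  simp [amalgam, hx.1, hx.2, hy.1, hy.2]

theorem amalgam_antisymm (h₁ : IsLinearOrderOn L₁ r₁) (h₂ : IsLinearOrderOn L₂ r₂)
    (hagree : ∀ x ∈ L₁ ∩ L₂, ∀ y ∈ L₁ ∩ L₂, r₁ x y ↔ r₂ x y) (hx : x ∈ L₁ ∪ L₂)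
    (hy : y ∈ L₁ ∪ L₂) (hxy : amalgam L₁ L₂ r₁ r₂ x y) (hyx : amalgam L₁ L₂ r₁ r₂ y x) :
    x = y := by
  rcases Set.mem_union_cases hx hy with ⟨hx, hy⟩ | ⟨hx, hy⟩ | ⟨hx, hy⟩ | ⟨hx, hy⟩
  · exact (isLinearOrderOn_left_amalgam h₁ hagree).antisymm hx hy hxy hyx
  · exact (isLinearOrderOn_right_amalgam h₂ hagree).antisymm hx hy hxy hyx
  · exact absurd hxy ((amalgam_iff_not_amalgam_swap h₁ h₂ hagree hy hx).1 hyx)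
  · exact absurd hyx ((amalgam_iff_not_amalgam_swap h₁ h₂ hagree hx hy).1 hxy)

theorem amalgam_total (h₁ : IsLinearOrderOn L₁ r₁) (h₂ : IsLinearOrderOn L₂ r₂)
    (hagree : ∀ x ∈ L₁ ∩ L₂, ∀ y ∈ L₁ ∩ L₂, r₁ x y ↔ r₂ x y) (hx : x ∈ L₁ ∪ L₂)
    (hy : y ∈ L₁ ∪ L₂) : amalgam L₁ L₂ r₁ r₂ x y ∨ amalgam L₁ L₂ r₁ r₂ y x := by
  rcases Set.mem_union_cases hx hy with ⟨hx, hy⟩ | ⟨hx, hy⟩ | ⟨hx, hy⟩ | ⟨hx, hy⟩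
  · exact (isLinearOrderOn_left_amalgam h₁ hagree).total hx hy
  · exact (isLinearOrderOn_right_amalgam h₂ hagree).total hx hy
  · rw [amalgam_iff_not_amalgam_swap h₁ h₂ hagree hy hx]
    exact em _
  · rw [amalgam_iff_not_amalgam_swap h₁ h₂ hagree hx hy]
    exact (em _).symm

theorem amalgam_cycle_eq_of_mem_left_of_mem_right (h₁ : IsLinearOrderOn L₁ r₁)
    (h₂ : IsLinearOrderOn L₂ r₂) (hagree : ∀ x ∈ L₁ ∩ L₂, ∀ y ∈ L₁ ∩ L₂, r₁ x y ↔ r₂ x y)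
    (hx : x ∈ L₁) (hy : y ∈ L₂) (hz : z ∈ L₁ ∪ L₂) (hxy : amalgam L₁ L₂ r₁ r₂ x y)
    (hyz : amalgam L₁ L₂ r₁ r₂ y z) (hzx : amalgam L₁ L₂ r₁ r₂ z x) : x = y := by
  obtain ⟨r, hr, hxr, hry⟩ := (amalgam_iff_exists_between h₁ h₂ hagree hx hy).1 hxy
  rcases hz with hz | hz
  · have hzy : amalgam L₁ L₂ r₁ r₂ z y := (amalgam_iff_exists_between h₁ h₂ hagree hz hy).2
      ⟨r, hr, h₁.trans hz hx hr.1 ((amalgam_iff_left hagree hz hx).1 hzx) hxr, hry⟩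
    obtain rfl : y = z := amalgam_antisymm h₁ h₂ hagree (.inr hy) (.inl hz) hyz hzy
    exact amalgam_antisymm h₁ h₂ hagree (.inl hx) (.inl hz) hxy hzx
  · have hxz : amalgam L₁ L₂ r₁ r₂ x z := (amalgam_iff_exists_between h₁ h₂ hagree hx hz).2
      ⟨r, hr, hxr, h₂.trans hr.2 hy hz hry ((amalgam_iff_right hagree hy hz).1 hyz)⟩
    obtain rfl : x = z := amalgam_antisymm h₁ h₂ hagree (.inl hx) (.inr hz) hxz hzx
    exact amalgam_antisymm h₁ h₂ hagree (.inl hx) (.inr hy) hxy hyz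

theorem amalgam_cycle_eq (h₁ : IsLinearOrderOn L₁ r₁) (h₂ : IsLinearOrderOn L₂ r₂)
    (hagree : ∀ x ∈ L₁ ∩ L₂, ∀ y ∈ L₁ ∩ L₂, r₁ x y ↔ r₂ x y) (hx : x ∈ L₁ ∪ L₂)
    (hy : y ∈ L₁ ∪ L₂) (hz : z ∈ L₁ ∪ L₂) (hxy : amalgam L₁ L₂ r₁ r₂ x y)
    (hyz : amalgam L₁ L₂ r₁ r₂ y z) (hzx : amalgam L₁ L₂ r₁ r₂ z x) :
    x = y ∨ y = z ∨ z = x := by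
  rcases id hx with hx₁ | hx₂ <;> rcases id hy with hy₁ | hy₂
  · rcases id hz with hz₁ | hz₂
    · exact .inl ((isLinearOrderOn_left_amalgam h₁ hagree).eq_of_cycle hx₁ hy₁ hz₁ hxy hyz hzx)
    · exact .inr (.inl (amalgam_cycle_eq_of_mem_left_of_mem_right h₁ h₂ hagree
        hy₁ hz₂ hx hyz hzx hxy))
  · exact .inl (amalgam_cycle_eq_of_mem_left_of_mem_right h₁ h₂ hagree hx₁ hy₂ hz hxy hyz hzx)
  · rcases id hz with hz₁ | hz₂
    · exact .inr (.inr (amalgam_cycle_eq_of_mem_left_of_mem_right h₁ h₂ hagree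
        hz₁ hx₂ hy hzx hxy hyz))
    · exact .inr (.inl (amalgam_cycle_eq_of_mem_left_of_mem_right h₁ h₂ hagree
        hy₁ hz₂ hx hyz hzx hxy))
  · rcases id hz with hz₁ | hz₂
    · exact .inr (.inr (amalgam_cycle_eq_of_mem_left_of_mem_right h₁ h₂ hagree
        hz₁ hx₂ hy hzx hxy hyz))
    · exact .inl ((isLinearOrderOn_right_amalgam h₂ hagree).eq_of_cycle hx₂ hy₂ hz₂ hxy hyz hzx)

theorem amalgam_trans (h₁ : IsLinearOrderOn L₁ r₁) (h₂ : IsLinearOrderOn L₂ r₂)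
    (hagree : ∀ x ∈ L₁ ∩ L₂, ∀ y ∈ L₁ ∩ L₂, r₁ x y ↔ r₂ x y) (hx : x ∈ L₁ ∪ L₂)
    (hy : y ∈ L₁ ∪ L₂) (hz : z ∈ L₁ ∪ L₂) (hxy : amalgam L₁ L₂ r₁ r₂ x y)
    (hyz : amalgam L₁ L₂ r₁ r₂ y z) : amalgam L₁ L₂ r₁ r₂ x z := by
  refine (amalgam_total h₁ h₂ hagree hx hz).elim id fun hzx => ?_
  rcases amalgam_cycle_eq h₁ h₂ hagree hx hy hz hxy hyz hzx with rfl | rfl | rfl <;> assumption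

theorem isLinearOrderOn_amalgam (h₁ : IsLinearOrderOn L₁ r₁) (h₂ : IsLinearOrderOn L₂ r₂)
    (hagree : ∀ x ∈ L₁ ∩ L₂, ∀ y ∈ L₁ ∩ L₂, r₁ x y ↔ r₂ x y) :
    IsLinearOrderOn (L₁ ∪ L₂) (amalgam L₁ L₂ r₁ r₂) := by
  refine ⟨?_, fun x hx y hy => amalgam_antisymm h₁ h₂ hagree hx hy,
    fun x hx y hy z hz => amalgam_trans h₁ h₂ hagree hx hy hz,
    fun x hx y hy => amalgam_total h₁ h₂ hagree hx hy⟩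
  rintro x (hx | hx)
  · exact (isLinearOrderOn_left_amalgam h₁ hagree).refl hx
  · exact (isLinearOrderOn_right_amalgam h₂ hagree).refl hx

theorem amalgam_lt_iff_exists_between (h₁ : IsLinearOrderOn L₁ r₁) (h₂ : IsLinearOrderOn L₂ r₂)
    (hagree : ∀ x ∈ L₁ ∩ L₂, ∀ y ∈ L₁ ∩ L₂, r₁ x y ↔ r₂ x y) (hx : x ∈ L₁ \ L₂)
    (hy : y ∈ L₂ \ L₁) :
    (amalgam L₁ L₂ r₁ r₂ x y ∧ ¬ amalgam L₁ L₂ r₁ r₂ y x) ↔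
      ∃ r ∈ L₁ ∩ L₂, (r₁ x r ∧ ¬ r₁ r x) ∧ (r₂ r y ∧ ¬ r₂ y r) := by
  rw [amalgam_iff_not_amalgam_swap h₁ h₂ hagree hy hx, not_not, and_self,
    amalgam_iff_exists_between h₁ h₂ hagree hx.1 hy.1]
  refine exists_congr fun r => and_congr_right fun hr => ?_
  have hxr : x ≠ r := fun h => hx.2 (h ▸ hr.2)
  have hry : r ≠ y := fun h => hy.2 (h ▸ hr.1)
  rw [h₁.rel_and_not_rel_iff hx.1 hr.1 hxr, h₂.rel_and_not_rel_iff hr.2 hy.1 hry]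

end

theorem stmt_0 {α : Type*} (L₁ L₂ : Set α) (r₁ r₂ : α → α → Prop)
    (h₁ : IsLinearOrderOn L₁ r₁) (h₂ : IsLinearOrderOn L₂ r₂)
    (R : Set α) (hR : R = L₁ ∩ L₂)
    (hagree : ∀ x ∈ R, ∀ y ∈ R, r₁ x y ↔ r₂ x y)
    (rc : α → α → Prop)
    (hrc : ∀ x y, rc x y ↔
      (x ∈ L₁ ∧ y ∈ L₁ ∧ r₁ x y) ∨
      (x ∈ L₂ ∧ y ∈ L₂ ∧ r₂ x y) ∨
      (x ∈ L₁ \ R ∧ y ∈ L₂ \ R ∧ ∃ r ∈ R, r₁ x r ∧ r₂ r y) ∨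
      (x ∈ L₂ \ R ∧ y ∈ L₁ \ R ∧ ¬ ∃ r ∈ R, r₁ y r ∧ r₂ r x)) :
    IsLinearOrderOn (L₁ ∪ L₂) rc ∧
    (∀ x ∈ L₁, ∀ y ∈ L₁, rc x y ↔ r₁ x y) ∧
    (∀ x ∈ L₂, ∀ y ∈ L₂, rc x y ↔ r₂ x y) ∧
    (∀ l₁ ∈ L₁ \ R, ∀ l₂ ∈ L₂ \ R,
      (rc l₁ l₂ ∧ ¬ rc l₂ l₁) ↔
        ∃ r ∈ R, (r₁ l₁ r ∧ ¬ r₁ r l₁) ∧ (r₂ r l₂ ∧ ¬ r₂ l₂ r)) := by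
  subst hR
  obtain rfl : rc = amalgam L₁ L₂ r₁ r₂ := by
    funext x y
    rw [hrc, amalgam, Set.sdiff_self_inter, Set.sdiff_inter_self_eq_sdiff]
  simp only [Set.sdiff_self_inter, Set.sdiff_inter_self_eq_sdiff]
  exact ⟨isLinearOrderOn_amalgam h₁ h₂ hagree, fun _ hx _ hy => amalgam_iff_left hagree hx hy,
    fun _ hx _ hy => amalgam_iff_right hagree hx hy,
    fun _ hx _ hy => amalgam_lt_iff_exists_between h₁ h₂ hagree hx hy⟩
end

section
/- Let φ, h : ℝ → ℝ be continuous increasing bijections with φ(x) > x for all x. For k ∈ ℤ set F_k = {x ∈ ℝ : h(x) = φ^k(x)} (where φ^k denotes the k-th iterate, with negative iterates given by the inverse). If ⋃_{k ∈ ℤ} F_k is dense in ℝ and F_k is nonempty for some k ∈ ℤ, then F_k = ℝ, i.e., h = φ^k. -/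
/-!
The coincidence set `{h = φ^k}` is closed. It is also open: it lies in the open band
`φ^(k-1) < h < φ^(k+1)`, and since the iterates of a point under `φ` increase strictly, the only
coincidence set meeting that band is `{h = φ^k}`. The union of the coincidence sets is dense, so the
whole band lies in the closure of `{h = φ^k}`, i.e. in the set itself. A nonempty clopen subset of
`ℝ` is everything.
-/

open Set

theorem OrderIso.strictMono_zpow_apply {α : Type*} [Preorder α] (φ : α ≃o α)
    (hφ : ∀ x, x < φ x) (x : α) : StrictMono fun m : ℤ => (φ ^ m) x := by
  refine strictMono_int_of_lt_succ fun m => ?_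
  rw [zpow_add_one]
  exact (φ ^ m).lt_iff_lt.2 (hφ x)

theorem Dense.subset_of_inter_subset {X : Type*} [TopologicalSpace X] {D U A : Set X}
    (hD : Dense D) (hU : IsOpen U) (hA : IsClosed A) (hDUA : D ∩ U ⊆ A) : U ⊆ A :=
  (hD.open_subset_closure_inter hU).trans <|
    hA.closure_subset_iff.2 <| by rwa [inter_comm]

theorem StrictMono.eq_of_pred_lt_of_lt_succ {α : Type*} [Preorder α] {g : ℤ → α}
    (hg : StrictMono g) {j k : ℤ} (hlo : g (k - 1) < g j) (hhi : g j < g (k + 1)) : j = k := by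
  have := hg.lt_iff_lt.1 hlo
  have := hg.lt_iff_lt.1 hhi
  omega

section CoincidenceSets

variable {X α : Type*} [TopologicalSpace X] [LinearOrder α] [TopologicalSpace α]
  [OrderClosedTopology α] {h : X → α} {f : ℤ → X → α}

theorem isClopen_setOf_eq_of_dense (hh : Continuous h) (hfc : ∀ j, Continuous (f j))
    (hf : ∀ x, StrictMono (f · x)) (hdense : Dense (⋃ j, {x | h x = f j x})) (k : ℤ) :
    IsClopen {x | h x = f k x} := by
  set A := {x | h x = f k x}
  set U := {x | f (k - 1) x < h x ∧ h x < f (k + 1) x}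
  have hA : IsClosed A := isClosed_eq hh (hfc k)
  have hU : IsOpen U := (isOpen_lt (hfc _) hh).inter (isOpen_lt hh (hfc _))
  have hAU : A ⊆ U := fun x (hx : h x = f k x) =>
    ⟨hx ▸ hf x (by omega), hx ▸ hf x (by omega)⟩
  have hUA : U ⊆ A := hdense.subset_of_inter_subset hU hA <| by
    rintro x ⟨hx, hlo, hhi⟩
    obtain ⟨j, hj⟩ := mem_iUnion.1 hx
    obtain rfl := (hf x).eq_of_pred_lt_of_lt_succ (hj ▸ hlo) (hj ▸ hhi)
    exact hj
  exact ⟨hA, (hAU.antisymm hUA).symm ▸ hU⟩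

theorem setOf_eq_eq_univ_of_dense [ConnectedSpace X] (hh : Continuous h)
    (hfc : ∀ j, Continuous (f j)) (hf : ∀ x, StrictMono (f · x))
    (hdense : Dense (⋃ j, {x | h x = f j x})) {k : ℤ} (hk : {x | h x = f k x}.Nonempty) :
    {x | h x = f k x} = univ :=
  (isClopen_setOf_eq_of_dense hh hfc hf hdense k).eq_univ hk

end CoincidenceSets

theorem stmt_1 (φ h : ℝ ≃o ℝ) (hφ : ∀ x : ℝ, x < φ x)
    (F : ℤ → Set ℝ) (hF : ∀ k : ℤ, F k = {x : ℝ | h x = (φ ^ k) x})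
    (hdense : Dense (⋃ k : ℤ, F k))
    (k : ℤ) (hk : (F k).Nonempty) :
    F k = Set.univ := by
  obtain rfl : F = fun k => {x | h x = (φ ^ k) x} := funext hF
  exact setOf_eq_eq_univ_of_dense (f := fun j => ⇑(φ ^ j)) h.continuous
    (fun j => (φ ^ j).continuous) (φ.strictMono_zpow_apply hφ) hdense hk
end
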